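/- arXiv:1203.5353 — 4 statements merged into one kernel-verified Lean document; each statement's English description precedes it below -/
import Mathlib

section
/- For any language L over alphabet Σ, if the empty string ε is not in L, then (complement of L⁺)⁺ = (complement of L*)*; and if ε is in L, then (complement of L*)* = (complement of L⁺)⁺ ∪ {ε}. -/
/-! Write `P = L⁺` and `S = L∗ = P + 1`. If `ε ∉ L`, then `ε ∉ P`, so `Pᶜ = Sᶜ + 1`; a language
containing `ε` has the same positive and plain Kleene closure, and adjoining `ε` does not change a
Kleene star, so `(Pᶜ)⁺ = (Sᶜ + 1)∗ = (Sᶜ)∗`. If `ε ∈ L`, then `P = S`, and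
`(Sᶜ)∗ = (Sᶜ)⁺ + 1` is the general relation between the two closures. -/

open scoped Computability

/-- The positive Kleene closure `L⁺` of a language: one or more concatenations
of words of `L`. -/
def Language.plus {α : Type*} (L : Language α) : Language α := L * L∗

section KleeneAlgebra

variable {α : Type*} [KleeneAlgebra α]

theorem kstar_add_one (a : α) : (a + 1)∗ = a∗ := by
  refine le_antisymm (kstar_le_of_mul_le_left one_le_kstar ?_) (kstar_mono le_self_add)
  rw [mul_add, mul_one]
  exact add_le kstar_mul_le_kstar le_rfl

theorem mul_kstar_eq_kstar_of_one_le {a : α} (h : 1 ≤ a) : a * a∗ = a∗ :=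
  le_antisymm mul_kstar_le_kstar <| calc
    a∗ = 1 * a∗ := (one_mul _).symm
    _ ≤ a * a∗ := mul_le_mul_left h _

end KleeneAlgebra

namespace Language

variable {α : Type*}

theorem kstar_eq_plus_add_one (L : Language α) : L∗ = L.plus + 1 := by
  rw [plus, add_comm, one_add_self_mul_kstar_eq_kstar]

theorem plus_eq_kstar_of_nil_mem {L : Language α} (h : [] ∈ L) : L.plus = L∗ :=
  mul_kstar_eq_kstar_of_one_le (Set.singleton_subset_iff.mpr h)

theorem nil_mem_plus_iff {L : Language α} : [] ∈ L.plus ↔ [] ∈ L := by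
  refine ⟨?_, fun h => ⟨[], h, [], nil_mem_kstar L, rfl⟩⟩
  rintro ⟨u, hu, v, -, huv⟩
  rwa [(List.append_eq_nil_iff.mp huv).1] at hu

theorem compl_plus_eq_compl_kstar_add_one {L : Language α} (h : [] ∉ L) :
    (L.plus)ᶜ = (L∗)ᶜ + 1 := by
  have one_le_compl_plus : (1 : Language α) ≤ (L.plus)ᶜ :=
    Set.singleton_subset_iff.mpr (mt nil_mem_plus_iff.mp h)
  rw [kstar_eq_plus_add_one, add_comm L.plus]
  change (L.plus)ᶜ = (1 ⊔ L.plus)ᶜ ⊔ 1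
  rw [compl_sup, sup_inf_right, compl_sup_eq_top, top_inf_eq, sup_eq_left.mpr one_le_compl_plus]

end Language

/-- If ε ∉ L then (Lᶜ⁺ of L⁺)⁺ = ((L*)ᶜ)*, and if ε ∈ L then
((L*)ᶜ)* = ((L⁺)ᶜ)⁺ ∪ {ε}. -/
theorem star_complement_star_eq_plus_complement_plus {α : Type*} (L : Language α) :
    ([] ∉ L → ((L.plus)ᶜ).plus = ((L∗)ᶜ)∗) ∧
    ([] ∈ L → ((L∗)ᶜ)∗ = ((L.plus)ᶜ).plus + 1) := by
  refine ⟨fun hL => ?_, fun hL => ?_⟩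
  · have nil_mem : [] ∈ (L∗)ᶜ + 1 := Or.inr Language.nil_mem_one
    rw [Language.compl_plus_eq_compl_kstar_add_one hL, Language.plus_eq_kstar_of_nil_mem nil_mem,
      kstar_add_one]
  · rw [Language.plus_eq_kstar_of_nil_mem hL, Language.kstar_eq_plus_add_one]
end

section
/- For all natural numbers n ≥ 1, the sum ∑_{k=1}^{n} C(n,k) · k! · (k+1)^{n−k} is at most n! · (n+2)^n. -/
/-- ∑_{k=1}^{n} C(n,k)·k!·(k+1)^(n−k) ≤ n!·(n+2)^n. -/
theorem sum_le_factorial_mul_pow (n : ℕ) (hn : 1 ≤ n) :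
    ∑ k ∈ Finset.Icc 1 n, n.choose k * k.factorial * (k + 1) ^ (n - k) ≤
      n.factorial * (n + 2) ^ n := by
  have h1 : ∀ k ∈ Finset.Icc 1 n,
      n.choose k * k.factorial * (k + 1) ^ (n - k) ≤
        n.factorial * (n + 2) ^ (n - 1) := by
    intro k hk
    simp only [Finset.mem_Icc] at hk
    have hc : n.choose k * k.factorial ≤ n.factorial := by
      calc n.choose k * k.factorial ≤ n.choose k * k.factorial * (n - k).factorial :=
            Nat.le_mul_of_pos_right _ (Nat.factorial_pos (n - k))
        _ = n.factorial := Nat.choose_mul_factorial_mul_factorial hk.2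
    have hp : (k + 1) ^ (n - k) ≤ (n + 2) ^ (n - 1) :=
      Nat.pow_le_pow_left (by omega) (n - k) |>.trans
        (Nat.pow_le_pow_right (by omega) (by omega))
    exact Nat.mul_le_mul hc hp
  calc ∑ k ∈ Finset.Icc 1 n, n.choose k * k.factorial * (k + 1) ^ (n - k)
      ≤ ∑ _k ∈ Finset.Icc 1 n, n.factorial * (n + 2) ^ (n - 1) :=
        Finset.sum_le_sum h1
    _ = n * (n.factorial * (n + 2) ^ (n - 1)) := by
        rw [Finset.sum_const, Nat.card_Icc]; simp [mul_comm]
    _ ≤ (n + 2) * (n.factorial * (n + 2) ^ (n - 1)) := by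
        exact Nat.mul_le_mul_right _ (by omega)
    _ = n.factorial * (n + 2) ^ n := by
        have : (n + 2) ^ n = (n + 2) * (n + 2) ^ (n - 1) := by
          rw [← pow_succ', Nat.sub_add_cancel hn]
        rw [this]; ring
end

section
/- Let D₃ be the DFA obtained from an n-state DFA D for L by: (1) subset construction on the NFA N₁ for L⁺, (2) complementing final states to get a DFA D₂ for (L⁺)ᶜ, (3) adding ε-transitions from non-initial final states of D₂ to its initial state and applying the subset construction. If S ⊆ T are subsets of the state set of D, then the states {S, T} and {S} of D₃ accept the same language, i.e., are equivalent. -/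
variable {α : Type*} {n : ℕ}

/-- The NFA N₁ for L⁺, obtained from the DFA D by adding ε-transitions from the
non-initial final states to the initial state (the ε-transitions are removed on
the fly: a transition entering a non-initial final state may also enter the
initial state). -/
def NOne (D : DFA α (Fin n)) : NFA α (Fin n) where
  step q a := {D.step q a} ∪ {s | s = D.start ∧ D.step q a ∈ D.accept ∧ D.step q a ≠ D.start}
  start := {D.start}
  accept := D.accept

/-- The DFA D₁ for L⁺: subset construction applied to N₁. -/
def DOne (D : DFA α (Fin n)) : DFA α (Set (Fin n)) := (NOne D).toDFA

/-- The DFA D₂ for (L⁺)ᶜ: D₁ with final and non-final states interchanged. -/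
def DTwo (D : DFA α (Fin n)) : DFA α (Set (Fin n)) where
  step := (DOne D).step
  start := (DOne D).start
  accept := ((DOne D).accept)ᶜ

/-- The NFA N₃ for ((L⁺)ᶜ)⁺, obtained from D₂ by adding ε-transitions from the
non-initial final states to the initial state. -/
def NThree (D : DFA α (Fin n)) : NFA α (Set (Fin n)) where
  step S a := {(DTwo D).step S a} ∪
    {X | X = (DTwo D).start ∧ (DTwo D).step S a ∈ (DTwo D).accept ∧
          (DTwo D).step S a ≠ (DTwo D).start}
  start := {(DTwo D).start}
  accept := (DTwo D).accept

/-- The DFA D₃ for ((L⁺)ᶜ)⁺: subset construction applied to N₃. -/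
def DThree (D : DFA α (Fin n)) : DFA α (Set (Set (Fin n))) := (NThree D).toDFA

/-- Monotonicity of `stepSet`. -/
lemma stepSet_mono' {σ : Type*} (N : NFA α σ) {A B : Set σ} (h : A ⊆ B) (a : α) :
    N.stepSet A a ⊆ N.stepSet B a := by
  intro x hx
  rw [NFA.mem_stepSet] at hx ⊢
  obtain ⟨t, ht, hx⟩ := hx
  exact ⟨t, h ht, hx⟩

/-- DTwo's step is monotone. -/
lemma dtwo_step_mono (D : DFA α (Fin n)) {A B : Set (Fin n)} (h : A ⊆ B) (a : α) :
    (DTwo D).step A a ⊆ (DTwo D).step B a := by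
  show (NOne D).stepSet A a ⊆ (NOne D).stepSet B a
  exact stepSet_mono' _ h a

/-- DTwo's accepting set is downward closed. -/
lemma dtwo_accept_down (D : DFA α (Fin n)) {A B : Set (Fin n)} (h : A ⊆ B)
    (hB : B ∈ (DTwo D).accept) : A ∈ (DTwo D).accept := by
  simp only [DTwo, DOne, NFA.toDFA, Set.mem_compl_iff, Set.mem_setOf_eq] at hB ⊢
  rintro ⟨s, hs, hacc⟩
  exact hB ⟨s, h hs, hacc⟩

/-- Simulation step: from a smaller state we can always reach a smaller state. -/
lemma nthree_step_rel (D : DFA α (Fin n)) {A B : Set (Fin n)} (h : A ⊆ B) (a : α)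
    {X : Set (Fin n)} (hX : X ∈ (NThree D).step B a) :
    ∃ Y ∈ (NThree D).step A a, Y ⊆ X := by
  rcases hX with hX | ⟨hX, hacc, hne⟩
  · -- X = (DTwo D).step B a
    refine ⟨(DTwo D).step A a, Or.inl rfl, ?_⟩
    rw [Set.mem_singleton_iff] at hX
    rw [hX]
    exact dtwo_step_mono D h a
  · -- X = start, step B a accepting and ≠ start
    have haccA : (DTwo D).step A a ∈ (DTwo D).accept :=
      dtwo_accept_down D (dtwo_step_mono D h a) hacc
    by_cases hA : (DTwo D).step A a = (DTwo D).start
    · exact ⟨(DTwo D).step A a, Or.inl rfl, by rw [hA, hX]⟩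
    · exact ⟨(DTwo D).start, Or.inr ⟨rfl, haccA, hA⟩, by rw [hX]⟩

/-- Simulation lemma lifted to evalFrom. -/
lemma dthree_eval_rel (D : DFA α (Fin n)) (w : List α) :
    ∀ (𝒜 ℬ : Set (Set (Fin n))), (∀ X ∈ ℬ, ∃ Y ∈ 𝒜, Y ⊆ X) →
      ∀ X ∈ (DThree D).evalFrom ℬ w, ∃ Y ∈ (DThree D).evalFrom 𝒜 w, Y ⊆ X := by
  induction w with
  | nil => intro 𝒜 ℬ h X hX; exact h X hX
  | cons a w ih =>
    intro 𝒜 ℬ h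
    refine ih _ _ ?_
    intro X hX
    rw [show (DThree D).step ℬ a = (NThree D).stepSet ℬ a from rfl,
      NFA.mem_stepSet] at hX
    obtain ⟨B, hB, hX⟩ := hX
    obtain ⟨A, hA, hAB⟩ := h B hB
    obtain ⟨Y, hY, hYX⟩ := nthree_step_rel D hAB a
      (by rcases hX with hX | hX
          · exact Or.inl hX
          · refine Or.inr ⟨hX.1, hX.2.1, hX.2.2⟩)
    refine ⟨Y, ?_, hYX⟩
    rw [show (DThree D).step 𝒜 a = (NThree D).stepSet 𝒜 a from rfl, NFA.mem_stepSet]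
    exact ⟨A, hA, hY⟩

lemma dthree_eval_union (D : DFA α (Fin n)) (w : List α) :
    ∀ (𝒜 ℬ : Set (Set (Fin n))),
      (DThree D).evalFrom (𝒜 ∪ ℬ) w = (DThree D).evalFrom 𝒜 w ∪ (DThree D).evalFrom ℬ w := by
  induction w with
  | nil => intro 𝒜 ℬ; rfl
  | cons a w ih =>
    intro 𝒜 ℬ
    have : (DThree D).step (𝒜 ∪ ℬ) a = (DThree D).step 𝒜 a ∪ (DThree D).step ℬ a := by
      exact Set.biUnion_union 𝒜 ℬ fun s => (NThree D).step s a
    show (DThree D).evalFrom ((DThree D).step (𝒜 ∪ ℬ) a) w = _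
    rw [this, ih]
    rfl

/-- If S ⊆ T, then the states {S, T} and {S} of the DFA D₃ are equivalent:
they accept the same strings. -/
theorem dthree_pair_equiv_single (D : DFA α (Fin n)) (S T : Set (Fin n))
    (hST : S ⊆ T) (w : List α) :
    (DThree D).evalFrom {S, T} w ∈ (DThree D).accept ↔
      (DThree D).evalFrom {S} w ∈ (DThree D).accept := by
  have hsplit : ({S, T} : Set (Set (Fin n))) = {S} ∪ {T} := Set.insert_eq S {T}
  have hrel := dthree_eval_rel D w {S} {T} (by
    intro X hX
    rw [Set.mem_singleton_iff] at hX
    exact ⟨S, rfl, hX ▸ hST⟩)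
  have hacc : (DThree D).accept = {𝒮 | ∃ Z ∈ 𝒮, Z ∈ (DTwo D).accept} := rfl
  rw [hsplit, dthree_eval_union]
  rw [hacc]
  simp only [Set.mem_setOf_eq, Set.mem_union]
  constructor
  · rintro ⟨Z, hZ | hZ, hZacc⟩
    · exact ⟨Z, hZ, hZacc⟩
    · obtain ⟨Y, hY, hYZ⟩ := hrel Z hZ
      exact ⟨Y, hY, dtwo_accept_down D hYZ hZacc⟩
  · rintro ⟨Z, hZ, hZacc⟩
    exact ⟨Z, Or.inl hZ, hZacc⟩
end

section
/- Every language expressible from a regular language L using only the operations of complement, Kleene star, and positive closure is, up to inclusion or exclusion of the empty word ε, equal to one of the ten languages: L, L⁺, Lᶜ⁺, L⁺ᶜ⁺, Lᶜ⁺ᶜ⁺ and their complements. In particular, the closure of {L} under complement, star, and plus is finite. -/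
/-!
Complement preserves agreement up to the empty word, and `K∗`, `K⁺` agree with each other up to
it and depend on `K` only up to it. Moreover `M⁺ = M` whenever `MM ⊆ M`. Every `K⁺` is closed
under concatenation, and so is `(Yᶜ⁺)ᶜ` whenever `Y` is: splitting a word of `Yᶜ⁺` into two
halves cuts one of its blocks into two pieces, and if neither half were in `Yᶜ⁺`, both pieces
would lie in `Y`, hence so would the block. So the ten languages are closed under complement and
`⁺` exactly.
-/

open scoped Computability symmDiff

/-- Languages expressible from L by complement, Kleene star and positive closure. -/
inductive Language.ExprFrom {α : Type*} (L : Language α) : Language α → Prop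
  | base : Language.ExprFrom L L
  | compl {K : Language α} : Language.ExprFrom L K → Language.ExprFrom L Kᶜ
  | star {K : Language α} : Language.ExprFrom L K → Language.ExprFrom L (K∗)
  | plus {K : Language α} : Language.ExprFrom L K → Language.ExprFrom L K.plus

theorem kstar_add_one_s17 {A : Type*} [KleeneAlgebra A] (a : A) : (a + 1)∗ = a∗ := by
  refine le_antisymm (kstar_le_of_mul_le_left one_le_kstar ?_) (kstar_mono le_self_add)
  rw [mul_add, mul_one]
  exact add_le kstar_mul_le_kstar le_rfl

theorem symmDiff_le_of_symmDiff_le_of_symmDiff_le {A : Type*} [GeneralizedBooleanAlgebra A]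
    {a b c d : A} (h₁ : a ∆ b ≤ d) (h₂ : b ∆ c ≤ d) : a ∆ c ≤ d :=
  (symmDiff_triangle a b c).trans (sup_le h₁ h₂)

theorem Set.Finite.setOf_exists_symmDiff_le {A : Type*} [GeneralizedBooleanAlgebra A]
    {T : Set A} {e : A} (hT : T.Finite) (he : (Set.Iic e).Finite) :
    {x | ∃ m ∈ T, x ∆ m ≤ e}.Finite := by
  refine (hT.image2 (· ∆ ·) he).subset ?_
  rintro x ⟨m, hm, hxm⟩
  exact ⟨m, hm, m ∆ x, by rwa [symmDiff_comm], symmDiff_symmDiff_cancel_left m x⟩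

theorem List.exists_eq_append_cons_of_append_eq_flatten {α : Type*} {v : List α} :
    ∀ {S : List (List α)} {u : List α}, S ≠ [] → u ++ v = S.flatten →
      ∃ S₁ w₁ w₂ S₂, S = S₁ ++ (w₁ ++ w₂) :: S₂ ∧ u = S₁.flatten ++ w₁ ∧ v = w₂ ++ S₂.flatten
  | [], _, hS, _ => absurd rfl hS
  | x :: T, u, _, h => by
    rw [List.flatten_cons, List.append_eq_append_iff] at h
    obtain ⟨a, rfl, rfl⟩ | ⟨c, rfl, hT⟩ := h
    · exact ⟨[], u, a, T, by simp, by simp, rfl⟩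
    · rcases eq_or_ne T [] with rfl | hTne
      · obtain ⟨rfl, rfl⟩ := List.append_eq_nil_iff.mp hT.symm
        exact ⟨[], x, [], [], by simp, by simp, rfl⟩
      · obtain ⟨S₁, w₁, w₂, S₂, rfl, rfl, rfl⟩ :=
          List.exists_eq_append_cons_of_append_eq_flatten hTne hT.symm
        exact ⟨x :: S₁, w₁, w₂, S₂, rfl, by simp, rfl⟩

namespace Language

variable {α : Type*} {K M Y : Language α}

theorem kstar_eq_of_symmDiff_le_one (h : K ∆ M ≤ 1) : K∗ = M∗ := by
  rw [symmDiff_le_iff, ← add_eq_sup, ← add_eq_sup] at h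
  exact le_antisymm ((kstar_mono h.1).trans (kstar_add_one_s17 M).le)
    ((kstar_mono h.2).trans (kstar_add_one_s17 K).le)

theorem plus_symmDiff_kstar_le_one (K : Language α) : K.plus ∆ K∗ ≤ 1 := by
  have hK : K∗ = 1 ⊔ K.plus := by rw [plus, ← add_eq_sup, one_add_self_mul_kstar_eq_kstar]
  rw [hK, symmDiff_of_le le_sup_right, sup_sdiff_right_self]
  exact sdiff_le

theorem plus_symmDiff_plus_le_one (h : K ∆ M ≤ 1) : K.plus ∆ M.plus ≤ 1 := by
  refine symmDiff_le_of_symmDiff_le_of_symmDiff_le (plus_symmDiff_kstar_le_one K) ?_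
  rw [kstar_eq_of_symmDiff_le_one h, symmDiff_comm]
  exact plus_symmDiff_kstar_le_one M

theorem mem_plus_iff {w : List α} :
    w ∈ K.plus ↔ ∃ S : List (List α), S ≠ [] ∧ w = S.flatten ∧ ∀ y ∈ S, y ∈ K := by
  rw [plus, mem_mul]
  constructor
  · rintro ⟨a, ha, b, hb, rfl⟩
    obtain ⟨T, rfl, hT⟩ := mem_kstar.mp hb
    exact ⟨a :: T, List.cons_ne_nil a T, rfl, List.forall_mem_cons.mpr ⟨ha, hT⟩⟩
  · rintro ⟨_ | ⟨a, T⟩, hS, rfl, hST⟩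
    · exact absurd rfl hS
    · rw [List.forall_mem_cons] at hST
      exact ⟨a, hST.1, T.flatten, join_mem_kstar hST.2, rfl⟩

theorem plus_mul_plus_le (K : Language α) : K.plus * K.plus ≤ K.plus :=
  calc K * K∗ * (K * K∗) = K * (K∗ * K * K∗) := by simp only [mul_assoc]
    _ ≤ K * (K∗ * K∗) := by gcongr; exact kstar_mul_le_kstar
    _ = K * K∗ := by rw [kstar_mul_kstar]

theorem plus_eq_self_of_mul_le (h : M * M ≤ M) : M.plus = M :=
  le_antisymm (mul_kstar_le_self h) (le_mul_of_one_le_right' one_le_kstar)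

theorem plus_plus (K : Language α) : K.plus.plus = K.plus :=
  plus_eq_self_of_mul_le (plus_mul_plus_le K)

theorem compl_plus_compl_mul_le (hY : Y * Y ≤ Y) :
    (Yᶜ.plus)ᶜ * (Yᶜ.plus)ᶜ ≤ (Yᶜ.plus)ᶜ := by
  rintro _ ⟨u, hu, v, hv, rfl⟩ huv
  obtain ⟨S, hS, hflat, hSY⟩ := mem_plus_iff.mp huv
  obtain ⟨S₁, w₁, w₂, S₂, rfl, rfl, rfl⟩ :=
    List.exists_eq_append_cons_of_append_eq_flatten hS hflat
  rw [List.forall_mem_append, List.forall_mem_cons] at hSY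
  obtain ⟨hS₁, hblock, hS₂⟩ := hSY
  have hw₁ : w₁ ∈ Y := by
    by_contra hw₁
    exact hu (mem_plus_iff.mpr ⟨S₁ ++ [w₁], by simp, by simp,
      List.forall_mem_append.mpr ⟨hS₁, List.forall_mem_singleton.mpr hw₁⟩⟩)
  have hw₂ : w₂ ∈ Y := by
    by_contra hw₂
    exact hv (mem_plus_iff.mpr ⟨w₂ :: S₂, by simp, by simp, List.forall_mem_cons.mpr ⟨hw₂, hS₂⟩⟩)
  exact hblock (hY (append_mem_mul hw₁ hw₂))

theorem ExprFrom.exists_mem_symmDiff_le_one {L : Language α} {T : Set (Language α)}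
    (hL : L ∈ T) (hcompl : ∀ M ∈ T, Mᶜ ∈ T) (hplus : ∀ M ∈ T, M.plus ∈ T)
    (hK : L.ExprFrom K) : ∃ M ∈ T, K ∆ M ≤ 1 := by
  induction hK with
  | base => exact ⟨L, hL, by simp⟩
  | compl _ ih =>
    obtain ⟨M, hM, h⟩ := ih
    exact ⟨Mᶜ, hcompl M hM, by rwa [compl_symmDiff_compl]⟩
  | star _ ih =>
    obtain ⟨M, hM, h⟩ := ih
    refine ⟨M.plus, hplus M hM, ?_⟩
    rw [kstar_eq_of_symmDiff_le_one h, symmDiff_comm]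
    exact plus_symmDiff_kstar_le_one M
  | plus _ ih =>
    obtain ⟨M, hM, h⟩ := ih
    exact ⟨M.plus, hplus M hM, plus_symmDiff_plus_le_one h⟩

theorem finite_Iic_one : (Set.Iic (1 : Language α)).Finite :=
  (Set.finite_singleton ([] : List α)).finite_subsets

def complPlusClosure (L : Language α) : Set (Language α) :=
  {L, L.plus, (Lᶜ).plus, ((L.plus)ᶜ).plus, (((Lᶜ).plus)ᶜ).plus,
    Lᶜ, (L.plus)ᶜ, ((Lᶜ).plus)ᶜ, (((L.plus)ᶜ).plus)ᶜ, ((((Lᶜ).plus)ᶜ).plus)ᶜ}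

variable (L : Language α)

theorem mem_complPlusClosure_self : L ∈ complPlusClosure L := by
  simp [complPlusClosure]

theorem compl_mem_complPlusClosure : ∀ M ∈ complPlusClosure L, Mᶜ ∈ complPlusClosure L := by
  simp only [complPlusClosure, Set.mem_insert_iff, Set.mem_singleton_iff]
  rintro M (rfl | rfl | rfl | rfl | rfl | rfl | rfl | rfl | rfl | rfl) <;> simp

theorem plus_mem_complPlusClosure : ∀ M ∈ complPlusClosure L, M.plus ∈ complPlusClosure L := by
  simp only [complPlusClosure, Set.mem_insert_iff, Set.mem_singleton_iff]
  rintro M (rfl | rfl | rfl | rfl | rfl | rfl | rfl | rfl | rfl | rfl) <;>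
    simp [plus_plus, plus_eq_self_of_mul_le (compl_plus_compl_mul_le (plus_mul_plus_le _))]

theorem complPlusClosure_finite : (complPlusClosure L).Finite := by
  simp only [complPlusClosure]
  exact Set.toFinite _

end Language

theorem exprFrom_classification_general {α : Type} (L : Language α) :
    (∀ K : Language α, L.ExprFrom K →
      ∃ M ∈ ({L, L.plus, (Lᶜ).plus, ((L.plus)ᶜ).plus, (((Lᶜ).plus)ᶜ).plus,
              Lᶜ, (L.plus)ᶜ, ((Lᶜ).plus)ᶜ, (((L.plus)ᶜ).plus)ᶜ,
              ((((Lᶜ).plus)ᶜ).plus)ᶜ} : Set (Language α)),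
        K ∆ M ≤ (1 : Language α)) ∧
    {K : Language α | L.ExprFrom K}.Finite := by
  have near : ∀ K, L.ExprFrom K → ∃ M ∈ L.complPlusClosure, K ∆ M ≤ 1 := fun _ hK =>
    hK.exists_mem_symmDiff_le_one L.mem_complPlusClosure_self L.compl_mem_complPlusClosure
      L.plus_mem_complPlusClosure
  exact ⟨near,
    (L.complPlusClosure_finite.setOf_exists_symmDiff_le Language.finite_Iic_one).subset near⟩

/-- Every language expressible from a regular language L by complement, star and
positive closure equals, up to the empty word, one of the ten languages
L, L⁺, Lᶜ⁺, L⁺ᶜ⁺, Lᶜ⁺ᶜ⁺ and their complements; in particular the closure of {L}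
under these operations is finite. -/
theorem exprFrom_classification {α : Type} (L : Language α) (hL : L.IsRegular) :
    (∀ K : Language α, L.ExprFrom K →
      ∃ M ∈ ({L, L.plus, (Lᶜ).plus, ((L.plus)ᶜ).plus, (((Lᶜ).plus)ᶜ).plus,
              Lᶜ, (L.plus)ᶜ, ((Lᶜ).plus)ᶜ, (((L.plus)ᶜ).plus)ᶜ,
              ((((Lᶜ).plus)ᶜ).plus)ᶜ} : Set (Language α)),
        K ∆ M ≤ (1 : Language α)) ∧
    {K : Language α | L.ExprFrom K}.Finite :=
  exprFrom_classification_general L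
end
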